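/- Let G be a 3-colorable good graph with a fixed vertex v0, and let G' = G ∪ {e} for some non-edge e of G, where G' is 3-colorable. If there exists a vertex x with x ∈ B_G and x ∈ T_{G'}, then there exists a middle-component C of G' (a connected component of the subgraph of G' induced on M_{G'}) such that x has at least 2 neighbors in C in the graph G'. -/

import Mathlib

open SimpleGraph

/-- The graph obtained from `G` by adding the edge `e`. -/
def addEdge {V : Type*} (G : SimpleGraph V) (e : Sym2 V) : SimpleGraph V :=
  G ⊔ SimpleGraph.fromEdgeSet {e}

/-- Top vertices: the vertices receiving the same color as `v0` in every proper
3-coloring of `G`. -/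
def topSet {V : Type*} (G : SimpleGraph V) (v0 : V) : Set V :=
  {x | ∀ c : G.Coloring (Fin 3), c x = c v0}

/-- Middle vertices: the vertices outside the top having a neighbor in the top. -/
def midSet {V : Type*} (G : SimpleGraph V) (v0 : V) : Set V :=
  {x | x ∉ topSet G v0 ∧ ∃ t ∈ topSet G v0, G.Adj x t}

/-- Bottom vertices: all remaining vertices. -/
def botVertSet {V : Type*} (G : SimpleGraph V) (v0 : V) : Set V :=
  {x | x ∉ topSet G v0 ∧ x ∉ midSet G v0}

/-- The vertex set of `Γ_G(u)`, the connected component of `u` in the subgraph of `G`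
induced on `{u} ∪ M_G`: all vertices reachable from `u` by a walk staying inside
`{u} ∪ M_G`. -/
def gammaSet {V : Type*} (G : SimpleGraph V) (v0 u : V) : Set V :=
  {w | ∃ p : G.Walk u w, ∀ z ∈ p.support, z ∈ insert u (midSet G v0)}

/-- `m` and `m'` lie in the same middle-component of `G` (a connected component of the
subgraph induced on `M_G`): they are joined by a walk staying inside `M_G`. -/
def midReach {V : Type*} (G : SimpleGraph V) (v0 : V) (m m' : V) : Prop :=
  ∃ p : G.Walk m m', ∀ z ∈ p.support, z ∈ midSet G v0

/-- Property (P1): the bottom `B_G` is an independent set in `G`. -/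
def prop1 {V : Type*} (G : SimpleGraph V) (v0 : V) : Prop :=
  ∀ u ∈ botVertSet G v0, ∀ v ∈ botVertSet G v0, ¬ G.Adj u v

/-- Property (P2): every middle-component of `G` has at most one attached bottom
vertex. -/
def prop2 {V : Type*} (G : SimpleGraph V) (v0 : V) : Prop :=
  ∀ u v m m' : V, u ∈ botVertSet G v0 → v ∈ botVertSet G v0 →
    m ∈ midSet G v0 → m' ∈ midSet G v0 →
    G.Adj u m → G.Adj v m' → midReach G v0 m m' → u = v

/-- `G` is good: it satisfies properties (P1) and (P2). -/
def goodGraph {V : Type*} (G : SimpleGraph V) (v0 : V) : Prop :=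
  prop1 G v0 ∧ prop2 G v0

/-- The bad pairs `BAD_G`: the pairs `uv` such that there exist distinct bottom vertices
`x ≠ y` with `u ∈ V(Γ_G(x))` and `v ∈ V(Γ_G(y))`. -/
def badPair {V : Type*} (G : SimpleGraph V) (v0 : V) (e : Sym2 V) : Prop :=
  ∃ u v x y : V, e = s(u, v) ∧ x ∈ botVertSet G v0 ∧ y ∈ botVertSet G v0 ∧ x ≠ y ∧
    u ∈ gammaSet G v0 x ∧ v ∈ gammaSet G v0 y

/-- `G` is almost good: `G` is good, or some edge can be removed from `G` so that the
resulting graph is good. -/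
def almostGood {V : Type*} (G : SimpleGraph V) (v0 : V) : Prop :=
  goodGraph G v0 ∨ ∃ e ∈ G.edgeSet, goodGraph (G.deleteEdges {e}) v0

/-! Suppose no middle-component of `G' = G + e` contains two neighbours of `x`, and take a
3-colouring `c` of `G'`, with `a = c v0`. On the middle-components of the neighbours `m` of `x`
with `c m = a + 1` swap the colours `a + 1` and `a + 2`, give the bottom vertices attached to
these components the colour `a`, and give `x` the colour `a + 1`: now every neighbour of `x`
has colour `a + 2`. This is a proper colouring as soon as no attached bottom vertex has a bottom
neighbour. In `G'` an edge between bottom vertices can only be `e`, and a walk from a neighbour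
of `x` through such a component to an endpoint of `e` avoids `e`, so (P2) for `G` forces it
through `x`, which is impossible. The new colouring separates `x` from `v0`, contradicting
`x ∈ T_{G'}`. -/

namespace SimpleGraph

variable {V : Type*} {G H : SimpleGraph V} {v0 : V}

theorem mem_topSet_self : v0 ∈ topSet G v0 := fun _ => rfl

theorem topSet_mono (h : G ≤ H) : topSet G v0 ⊆ topSet H v0 :=
  fun _ hz c => hz (c.comp (Hom.ofLE h))

theorem mem_midSet_or_mem_botVertSet {z : V} (hz : z ∉ topSet G v0) :
    z ∈ midSet G v0 ∨ z ∈ botVertSet G v0 := by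
  by_cases hzM : z ∈ midSet G v0
  · exact .inl hzM
  · exact .inr ⟨hz, hzM⟩

theorem botVertSet_anti (h : G ≤ H) : botVertSet H v0 ⊆ botVertSet G v0 := by
  rintro z ⟨hzT, hzM⟩
  refine ⟨fun hz => hzT (topSet_mono h hz), fun ⟨_, t, ht, hzt⟩ => hzM ?_⟩
  exact ⟨hzT, t, topSet_mono h ht, h hzt⟩

theorem not_adj_of_mem_botVertSet_of_mem_topSet {b t : V} (hb : b ∈ botVertSet G v0)
    (ht : t ∈ topSet G v0) : ¬ G.Adj b t :=
  fun hbt => hb.2 ⟨hb.1, t, ht, hbt⟩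

theorem Coloring.ne_of_mem_midSet (c : G.Coloring (Fin 3)) {m : V}
    (hm : m ∈ midSet G v0) : c m ≠ c v0 := by
  obtain ⟨-, t, ht, hmt⟩ := hm
  rw [← ht c]
  exact c.valid hmt

theorem Coloring.mem_midSet_of_adj (c : G.Coloring (Fin 3)) {t w : V}
    (ht : t ∈ topSet G v0) (htw : G.Adj t w) : w ∈ midSet G v0 := by
  refine ⟨fun hw => c.valid htw ?_, t, ht, htw.symm⟩
  rw [ht c, hw c]

theorem midReach_refl {m : V} (hm : m ∈ midSet G v0) : midReach G v0 m m :=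
  ⟨.nil, by simpa using hm⟩

theorem midReach.mem_midSet_right {m z : V} (h : midReach G v0 m z) : z ∈ midSet G v0 :=
  h.elim fun p hp => hp z p.end_mem_support

theorem midReach.trans_adj {m z w : V} (h : midReach G v0 m z) (hw : w ∈ midSet G v0)
    (hzw : G.Adj z w) : midReach G v0 m w := by
  obtain ⟨p, hp⟩ := h
  refine ⟨p.concat hzw, fun u hu => ?_⟩
  rw [Walk.support_concat, List.mem_append, List.mem_singleton] at hu
  rcases hu with hu | rfl
  exacts [hp u hu, hw]

theorem Walk.exists_walk_within_to_boundary {A : Set V} :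
    ∀ {u v : V} (p : G.Walk u v), u ∈ A → v ∉ A →
      ∃ a b, b ∈ p.support ∧ a ∈ A ∧ b ∉ A ∧ G.Adj a b ∧
        ∃ q : G.Walk u a, ∀ z ∈ q.support, z ∈ A
  | _, _, .nil, hu, hv => absurd hu hv
  | u, _, .cons (v := b) hub p, hu, hv => by
    by_cases hb : b ∈ A
    · obtain ⟨a, b', hb', ha, hb'A, hab', q, hq⟩ := p.exists_walk_within_to_boundary hb hv
      refine ⟨a, b', by simp [hb'], ha, hb'A, hab', .cons hub q, fun z hz => ?_⟩
      rw [Walk.support_cons, List.mem_cons] at hz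
      rcases hz with rfl | hz
      exacts [hu, hq z hz]
    · exact ⟨u, b, by simp, hu, hb, hub, .nil, by simpa using hu⟩

theorem goodGraph.mem_support_of_adj_of_mem_botVertSet (hgood : goodGraph G v0) {x m u : V}
    (hx : x ∈ botVertSet G v0) (hxm : G.Adj x m) (hu : u ∈ botVertSet G v0)
    (p : G.Walk m u) (hp : ∀ z ∈ p.support, z ∉ topSet G v0) : x ∈ p.support := by
  have hm : m ∈ midSet G v0 :=
    (mem_midSet_or_mem_botVertSet (hp m p.start_mem_support)).resolve_right
      fun hm => hgood.1 x hx m hm hxm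
  obtain ⟨a, b, hb, ha, hbM, hab, q, hq⟩ := p.exists_walk_within_to_boundary hm hu.2
  rwa [hgood.2 x b m a hx ⟨hp b hb, hbM⟩ hm ha hxm hab.symm ⟨q, hq⟩]

theorem addEdge_adj {e : Sym2 V} {a b : V} :
    (addEdge G e).Adj a b ↔ G.Adj a b ∨ s(a, b) = e ∧ a ≠ b := by
  simp [addEdge, fromEdgeSet_adj]

theorem adj_of_addEdge_adj {e : Sym2 V} {a b : V} (h : (addEdge G e).Adj a b) (ha : a ∉ e) :
    G.Adj a b :=
  (addEdge_adj.1 h).resolve_right fun ⟨hab, _⟩ => ha (hab ▸ Sym2.mem_mk_left a b)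

theorem Walk.exists_support_eq_of_addEdge {e : Sym2 V} {u v : V} (p : (addEdge G e).Walk u v)
    (hp : ∀ z ∈ p.support, z ∉ e) : ∃ q : G.Walk u v, q.support = p.support := by
  refine ⟨p.transfer G fun d hd => ?_, p.support_transfer _⟩
  induction d using Sym2.ind with
  | _ a b =>
    exact adj_of_addEdge_adj (p.adj_of_mem_edges hd) (hp a (p.fst_mem_support_of_mem_edges hd))

theorem goodGraph.addEdge_not_adj_of_midReach (hgood : goodGraph G v0) {e : Sym2 V}
    {x u w m y : V}
    (hxB : x ∈ botVertSet G v0) (hxT : x ∈ topSet (addEdge G e) v0)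
    (hu : u ∈ botVertSet (addEdge G e) v0) (hw : w ∈ botVertSet (addEdge G e) v0)
    (huw : (addEdge G e).Adj u w) (hxm : (addEdge G e).Adj x m)
    (hmy : midReach (addEdge G e) v0 m y) : ¬ (addEdge G e).Adj u y := by
  intro huy
  have hle : G ≤ addEdge G e := le_sup_left
  have he : e = s(u, w) := by
    rcases addEdge_adj.1 huw with h | ⟨h, -⟩
    · exact absurd h (hgood.1 u (botVertSet_anti hle hu) w (botVertSet_anti hle hw))
    · exact h.symm
  have hnot_mem_e : ∀ z, z ∉ botVertSet (addEdge G e) v0 → z ∉ e := by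
    rintro z hz hze
    rw [he, Sym2.mem_iff] at hze
    rcases hze with rfl | rfl
    exacts [hz hu, hz hw]
  obtain ⟨p, hp⟩ := hmy
  obtain ⟨q, hq⟩ :=
    p.exists_support_eq_of_addEdge fun z hz => hnot_mem_e z fun hzB => hzB.2 (hp z hz)
  have hyu : G.Adj y u :=
    adj_of_addEdge_adj huy.symm (hnot_mem_e y fun hyB => hyB.2 (hp y p.end_mem_support))
  have hxm' : G.Adj x m := adj_of_addEdge_adj hxm (hnot_mem_e x fun hxB' => hxB'.1 hxT)
  have hsupp : ∀ z ∈ (q.concat hyu).support, z ∉ topSet (addEdge G e) v0 := by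
    intro z hz
    rw [Walk.support_concat, hq, List.mem_append, List.mem_singleton] at hz
    rcases hz with hz | rfl
    exacts [(hp z hz).1, hu.1]
  exact hsupp x (hgood.mem_support_of_adj_of_mem_botVertSet hxB hxm' (botVertSet_anti hle hu) _
    fun z hz hzT => hsupp z hz (topSet_mono hle hzT)) hxT

end SimpleGraph

namespace SimpleGraph.Coloring

variable {V : Type*} {H : SimpleGraph V} (c : H.Coloring (Fin 3)) (v0 x : V)

def swapSet : Set V :=
  {z | ∃ m, H.Adj x m ∧ c m = c v0 + 1 ∧ midReach H v0 m z}

def attachedSet : Set V :=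
  {z | z ∈ botVertSet H v0 ∧ ∃ y ∈ c.swapSet v0 x, H.Adj z y}

open Classical in
noncomputable def recolor (z : V) : Fin 3 :=
  if z = x then c v0 + 1
  else if z ∈ c.attachedSet v0 x then c v0
  else if z ∈ c.swapSet v0 x then Equiv.swap (c v0 + 1) (c v0 + 2) (c z)
  else c z

variable {c v0 x}

theorem swapSet_subset_midSet : c.swapSet v0 x ⊆ midSet H v0 :=
  fun _ ⟨_, _, _, h⟩ => h.mem_midSet_right

theorem mem_swapSet_of_adj {z w : V} (hz : z ∈ c.swapSet v0 x) (hw : w ∈ midSet H v0)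
    (hzw : H.Adj z w) : w ∈ c.swapSet v0 x :=
  let ⟨m, hxm, hm, hmz⟩ := hz
  ⟨m, hxm, hm, hmz.trans_adj hw hzw⟩

theorem recolor_self : c.recolor v0 x x = c v0 + 1 := if_pos rfl

theorem recolor_of_not_mem {z : V} (hzx : z ≠ x) (hzR : z ∉ c.attachedSet v0 x)
    (hzS : z ∉ c.swapSet v0 x) : c.recolor v0 x z = c z := by
  simp only [recolor, if_neg hzx, if_neg hzR, if_neg hzS]

theorem recolor_of_mem_topSet {z : V} (hz : z ∈ topSet H v0) (hzx : z ≠ x) :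
    c.recolor v0 x z = c v0 := by
  rw [recolor_of_not_mem hzx (fun h => h.1.1 hz) (fun h => (swapSet_subset_midSet h).1 hz), hz c]

variable (hx : x ∈ topSet H v0)
include hx

theorem recolor_of_mem_attachedSet {z : V} (hz : z ∈ c.attachedSet v0 x) :
    c.recolor v0 x z = c v0 := by
  have hzx : z ≠ x := (ne_of_mem_of_not_mem hx hz.1.1).symm
  simp only [recolor, if_neg hzx, if_pos hz]

theorem recolor_of_mem_swapSet {z : V} (hz : z ∈ c.swapSet v0 x) :
    c.recolor v0 x z = Equiv.swap (c v0 + 1) (c v0 + 2) (c z) := by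
  have hzM := swapSet_subset_midSet hz
  have hzx : z ≠ x := (ne_of_mem_of_not_mem hx hzM.1).symm
  simp only [recolor, if_neg hzx, if_neg fun h : z ∈ c.attachedSet v0 x => h.1.2 hzM, if_pos hz]

theorem recolor_ne_of_mem_midSet {z : V} (hz : z ∈ midSet H v0) : c.recolor v0 x z ≠ c v0 := by
  by_cases hzS : z ∈ c.swapSet v0 x
  · have hfix : Equiv.swap (c v0 + 1) (c v0 + 2) (c v0) = c v0 :=
      Equiv.swap_apply_of_ne_of_ne ((by decide : ∀ a : Fin 3, a ≠ a + 1) _)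
        ((by decide : ∀ a : Fin 3, a ≠ a + 2) _)
    rw [recolor_of_mem_swapSet hx hzS]
    exact fun h => c.ne_of_mem_midSet hz (Equiv.injective _ (h.trans hfix.symm))
  · rw [recolor_of_not_mem (ne_of_mem_of_not_mem hx hz.1).symm (fun h => h.1.2 hz) hzS]
    exact c.ne_of_mem_midSet hz

variable (hsep : ∀ m₁ m₂, H.Adj x m₁ → H.Adj x m₂ → midReach H v0 m₁ m₂ → m₁ = m₂)
include hsep

theorem recolor_ne_add_one_of_adj {w : V} (hxw : H.Adj x w) :
    c.recolor v0 x w ≠ c v0 + 1 := by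
  have hwM := c.mem_midSet_of_adj hx hxw
  by_cases hwS : w ∈ c.swapSet v0 x
  · obtain ⟨m, hxm, hm, hmw⟩ := hwS
    rw [recolor_of_mem_swapSet hx ⟨m, hxm, hm, hmw⟩, ← hsep m w hxm hxw hmw, hm,
      Equiv.swap_apply_left]
    exact (by decide : ∀ a : Fin 3, a + 2 ≠ a + 1) _
  · rw [recolor_of_not_mem hxw.ne.symm (fun h => h.1.2 hwM) hwS]
    exact fun h => hwS ⟨w, hxw, h, midReach_refl hwM⟩

theorem recolor_ne_of_adj_of_mem_swapSet {z w : V} (hz : z ∈ c.swapSet v0 x)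
    (hzw : H.Adj z w) :
    c.recolor v0 x z ≠ c.recolor v0 x w := by
  have hzM := swapSet_subset_midSet hz
  by_cases hwx : w = x
  · subst hwx
    rw [recolor_self]
    exact recolor_ne_add_one_of_adj hx hsep hzw.symm
  by_cases hwT : w ∈ topSet H v0
  · rw [recolor_of_mem_topSet hwT hwx]
    exact recolor_ne_of_mem_midSet hx hzM
  rcases mem_midSet_or_mem_botVertSet hwT with hwM | hwB
  · rw [recolor_of_mem_swapSet hx hz, recolor_of_mem_swapSet hx (mem_swapSet_of_adj hz hwM hzw)]
    exact (Equiv.injective _).ne (c.valid hzw)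
  · rw [recolor_of_mem_attachedSet hx ⟨hwB, z, hz, hzw.symm⟩]
    exact recolor_ne_of_mem_midSet hx hzM

variable (hbot : ∀ u w m y, u ∈ botVertSet H v0 → w ∈ botVertSet H v0 → H.Adj u w →
  H.Adj x m → midReach H v0 m y → ¬ H.Adj u y)

omit hsep in
include hbot in
theorem recolor_ne_of_adj_of_mem_attachedSet {z w : V} (hz : z ∈ c.attachedSet v0 x)
    (hzw : H.Adj z w) :
    c.recolor v0 x z ≠ c.recolor v0 x w := by
  rw [recolor_of_mem_attachedSet hx hz]
  obtain ⟨hzB, y, ⟨m, hxm, -, hmy⟩, hzy⟩ := hz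
  have hwM : w ∈ midSet H v0 :=
    (mem_midSet_or_mem_botVertSet fun hwT => not_adj_of_mem_botVertSet_of_mem_topSet hzB hwT hzw)
      |>.resolve_right fun hwB => hbot z w m y hzB hwB hzw hxm hmy hzy
  exact (recolor_ne_of_mem_midSet hx hwM).symm

include hbot in
theorem recolor_ne_of_adj {z w : V} (hzw : H.Adj z w) : c.recolor v0 x z ≠ c.recolor v0 x w := by
  have hmoved : ∀ {z w : V}, H.Adj z w → z = x ∨ z ∈ c.attachedSet v0 x ∨ z ∈ c.swapSet v0 x →
      c.recolor v0 x z ≠ c.recolor v0 x w := by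
    rintro z w hzw (rfl | hz | hz)
    · rw [recolor_self]
      exact (recolor_ne_add_one_of_adj hx hsep hzw).symm
    · exact recolor_ne_of_adj_of_mem_attachedSet hx hbot hz hzw
    · exact recolor_ne_of_adj_of_mem_swapSet hx hsep hz hzw
  by_cases hz : z = x ∨ z ∈ c.attachedSet v0 x ∨ z ∈ c.swapSet v0 x
  · exact hmoved hzw hz
  by_cases hw : w = x ∨ w ∈ c.attachedSet v0 x ∨ w ∈ c.swapSet v0 x
  · exact (hmoved hzw.symm hw).symm
  simp only [not_or] at hz hw
  rw [recolor_of_not_mem hz.1 hz.2.1 hz.2.2, recolor_of_not_mem hw.1 hw.2.1 hw.2.2]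
  exact c.valid hzw

end SimpleGraph.Coloring

theorem SimpleGraph.exists_adj_adj_midReach_of_mem_topSet {V : Type*} {H : SimpleGraph V}
    {v0 x : V} (hH : H.Colorable 3) (hx : x ∈ topSet H v0) (hxv0 : x ≠ v0)
    (hbot : ∀ u w m y, u ∈ botVertSet H v0 → w ∈ botVertSet H v0 → H.Adj u w →
      H.Adj x m → midReach H v0 m y → ¬ H.Adj u y) :
    ∃ m₁ m₂ : V, m₁ ≠ m₂ ∧ m₁ ∈ midSet H v0 ∧ m₂ ∈ midSet H v0 ∧
      H.Adj x m₁ ∧ H.Adj x m₂ ∧ midReach H v0 m₁ m₂ := by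
  obtain ⟨c⟩ := hH
  by_contra! hcon
  have hsep : ∀ m₁ m₂, H.Adj x m₁ → H.Adj x m₂ → midReach H v0 m₁ m₂ → m₁ = m₂ :=
    fun m₁ m₂ h₁ h₂ h => by_contra fun hne =>
      hcon m₁ m₂ hne (c.mem_midSet_of_adj hx h₁) (c.mem_midSet_of_adj hx h₂) h₁ h₂ h
  have hrecolor := hx (Coloring.mk (c.recolor v0 x) (c.recolor_ne_of_adj hx hsep hbot))
  change c.recolor v0 x x = c.recolor v0 x v0 at hrecolor
  rw [Coloring.recolor_self, Coloring.recolor_of_mem_topSet mem_topSet_self hxv0.symm] at hrecolor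
  exact (by decide : ∀ a : Fin 3, a + 1 ≠ a) _ hrecolor

theorem statement_15_general {V : Type*} (G : SimpleGraph V) (v0 : V)
    (hgood : goodGraph G v0)
    (e : Sym2 V)
    (hcol' : (addEdge G e).Colorable 3)
    (x : V) (hxB : x ∈ botVertSet G v0) (hxT : x ∈ topSet (addEdge G e) v0) :
    ∃ m₁ m₂ : V, m₁ ≠ m₂ ∧
      m₁ ∈ midSet (addEdge G e) v0 ∧ m₂ ∈ midSet (addEdge G e) v0 ∧
      (addEdge G e).Adj x m₁ ∧ (addEdge G e).Adj x m₂ ∧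
      midReach (addEdge G e) v0 m₁ m₂ :=
  exists_adj_adj_midReach_of_mem_topSet hcol' hxT
    (ne_of_mem_of_not_mem mem_topSet_self hxB.1).symm
    fun _ _ _ _ hu hw huw hxm hmy => hgood.addEdge_not_adj_of_midReach hxB hxT hu hw huw hxm hmy

/-- If `G` is a good 3-colorable graph, `G' = G ∪ {e}` is 3-colorable for a non-edge `e`
of `G`, and some vertex `x` lies in `B_G` and in `T_{G'}`, then there is a
middle-component `C` of `G'` in which `x` has at least two neighbors (in `G'`): there
are two distinct `G'`-neighbors of `x` lying in `M_{G'}` in the same middle-component. -/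
theorem statement_15 {V : Type*} (G : SimpleGraph V) (v0 : V)
    (hcol : G.Colorable 3) (hgood : goodGraph G v0)
    (e : Sym2 V) (hd : ¬ e.IsDiag) (hne : e ∉ G.edgeSet)
    (hcol' : (addEdge G e).Colorable 3)
    (x : V) (hxB : x ∈ botVertSet G v0) (hxT : x ∈ topSet (addEdge G e) v0) :
    ∃ m₁ m₂ : V, m₁ ≠ m₂ ∧
      m₁ ∈ midSet (addEdge G e) v0 ∧ m₂ ∈ midSet (addEdge G e) v0 ∧
      (addEdge G e).Adj x m₁ ∧ (addEdge G e).Adj x m₂ ∧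
      midReach (addEdge G e) v0 m₁ m₂ :=
  statement_15_general G v0 hgood e hcol' x hxB hxT
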